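/- arXiv:2603.14576 — 4 statements merged into one kernel-verified Lean document; each statement's English description precedes it below -/
import Mathlib

section
/- Let r ∈ [0,1] and m ∈ ℕ with m ≥ 1. Set k₊ = (1 + sinc(4r))/2 and k₋ = sinc(2r)². Then k₊^m - k₋^m ≥ (16 r⁴ m / 45) · exp(-c m r²), where c = -2 ln(sinc(2)). -/
open Real hiding sinc
open Set

private lemma mono_aux {f f' : ℝ → ℝ} (hd : ∀ y, HasDerivAt f (f' y) y) (h0 : f 0 = 0)
    (hpos : ∀ y, 0 ≤ y → 0 ≤ f' y) {x : ℝ} (hx : 0 ≤ x) : 0 ≤ f x := by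
  have mono : MonotoneOn f (Ici 0) := by
    refine monotoneOn_of_deriv_nonneg (convex_Ici 0)
      (fun y _ => (hd y).continuousAt.continuousWithinAt)
      (fun y _ => (hd y).differentiableAt.differentiableWithinAt) (fun y hy => ?_)
    rw [(hd y).deriv]
    rw [interior_Ici] at hy
    exact hpos y (le_of_lt hy)
  have := mono self_mem_Ici hx hx
  rwa [h0] at this

private lemma sin_ge3 {x : ℝ} (hx : 0 ≤ x) : (x - x^3/6) ≤ Real.sin x := by
  have h : 0 ≤ Real.sin x - (x - x^3/6) := by
    refine mono_aux (f := fun y => Real.sin y - (y - y^3/6))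
      (f' := fun y => Real.cos y - (1 - y^2/2)) (fun y => ?_) (by norm_num) (fun y hy => ?_) hx
    · have h2 := (Real.hasDerivAt_sin y).sub ((hasDerivAt_id y).sub ((hasDerivAt_pow 3 y).div_const 6))
      refine h2.congr_deriv ?_
      push_cast; ring
    · nlinarith [Real.one_sub_sq_div_two_le_cos (x := y)]
  linarith

private lemma cos_le4 {x : ℝ} (hx : 0 ≤ x) : Real.cos x ≤ (1 - x^2/2 + x^4/24) := by
  have h : 0 ≤ (1 - x^2/2 + x^4/24) - Real.cos x := by
    refine mono_aux (f := fun y => (1 - y^2/2 + y^4/24) - Real.cos y)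
      (f' := fun y => Real.sin y - (y - y^3/6)) (fun y => ?_) (by norm_num) (fun y hy => ?_) hx
    · have h2 := (((hasDerivAt_const y (1:ℝ)).sub ((hasDerivAt_pow 2 y).div_const 2)).add ((hasDerivAt_pow 4 y).div_const 24)).sub (Real.hasDerivAt_cos y)
      refine h2.congr_deriv ?_
      push_cast; ring
    · have := sin_ge3 hy; linarith
  linarith

private lemma sin_le5 {x : ℝ} (hx : 0 ≤ x) : Real.sin x ≤ (x - x^3/6 + x^5/120) := by
  have h : 0 ≤ (x - x^3/6 + x^5/120) - Real.sin x := by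
    refine mono_aux (f := fun y => (y - y^3/6 + y^5/120) - Real.sin y)
      (f' := fun y => (1 - y^2/2 + y^4/24) - Real.cos y) (fun y => ?_) (by norm_num) (fun y hy => ?_) hx
    · have h2 := (((hasDerivAt_id y).sub ((hasDerivAt_pow 3 y).div_const 6)).add ((hasDerivAt_pow 5 y).div_const 120)).sub (Real.hasDerivAt_sin y)
      refine h2.congr_deriv ?_
      push_cast; ring
    · have := cos_le4 hy; linarith
  linarith

private lemma cos_ge6 {x : ℝ} (hx : 0 ≤ x) : (1 - x^2/2 + x^4/24 - x^6/720) ≤ Real.cos x := by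
  have h : 0 ≤ Real.cos x - (1 - x^2/2 + x^4/24 - x^6/720) := by
    refine mono_aux (f := fun y => Real.cos y - (1 - y^2/2 + y^4/24 - y^6/720))
      (f' := fun y => (y - y^3/6 + y^5/120) - Real.sin y) (fun y => ?_) (by norm_num) (fun y hy => ?_) hx
    · have h2 := (Real.hasDerivAt_cos y).sub ((((hasDerivAt_const y (1:ℝ)).sub ((hasDerivAt_pow 2 y).div_const 2)).add ((hasDerivAt_pow 4 y).div_const 24)).sub ((hasDerivAt_pow 6 y).div_const 720))
      refine h2.congr_deriv ?_
      push_cast; ring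
    · have := sin_le5 hy; linarith
  linarith

private lemma sin_ge7 {x : ℝ} (hx : 0 ≤ x) : (x - x^3/6 + x^5/120 - x^7/5040) ≤ Real.sin x := by
  have h : 0 ≤ Real.sin x - (x - x^3/6 + x^5/120 - x^7/5040) := by
    refine mono_aux (f := fun y => Real.sin y - (y - y^3/6 + y^5/120 - y^7/5040))
      (f' := fun y => Real.cos y - (1 - y^2/2 + y^4/24 - y^6/720)) (fun y => ?_) (by norm_num) (fun y hy => ?_) hx
    · have h2 := (Real.hasDerivAt_sin y).sub ((((hasDerivAt_id y).sub ((hasDerivAt_pow 3 y).div_const 6)).add ((hasDerivAt_pow 5 y).div_const 120)).sub ((hasDerivAt_pow 7 y).div_const 5040))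
      refine h2.congr_deriv ?_
      push_cast; ring
    · have := cos_ge6 hy; linarith
  linarith

private lemma cos_le8 {x : ℝ} (hx : 0 ≤ x) : Real.cos x ≤ (1 - x^2/2 + x^4/24 - x^6/720 + x^8/40320) := by
  have h : 0 ≤ (1 - x^2/2 + x^4/24 - x^6/720 + x^8/40320) - Real.cos x := by
    refine mono_aux (f := fun y => (1 - y^2/2 + y^4/24 - y^6/720 + y^8/40320) - Real.cos y)
      (f' := fun y => Real.sin y - (y - y^3/6 + y^5/120 - y^7/5040)) (fun y => ?_) (by norm_num) (fun y hy => ?_) hx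
    · have h2 := (((((hasDerivAt_const y (1:ℝ)).sub ((hasDerivAt_pow 2 y).div_const 2)).add ((hasDerivAt_pow 4 y).div_const 24)).sub ((hasDerivAt_pow 6 y).div_const 720)).add ((hasDerivAt_pow 8 y).div_const 40320)).sub (Real.hasDerivAt_cos y)
      refine h2.congr_deriv ?_
      push_cast; ring
    · have := sin_ge7 hy; linarith
  linarith

private lemma sin_le9 {x : ℝ} (hx : 0 ≤ x) : Real.sin x ≤ (x - x^3/6 + x^5/120 - x^7/5040 + x^9/362880) := by
  have h : 0 ≤ (x - x^3/6 + x^5/120 - x^7/5040 + x^9/362880) - Real.sin x := by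
    refine mono_aux (f := fun y => (y - y^3/6 + y^5/120 - y^7/5040 + y^9/362880) - Real.sin y)
      (f' := fun y => (1 - y^2/2 + y^4/24 - y^6/720 + y^8/40320) - Real.cos y) (fun y => ?_) (by norm_num) (fun y hy => ?_) hx
    · have h2 := (((((hasDerivAt_id y).sub ((hasDerivAt_pow 3 y).div_const 6)).add ((hasDerivAt_pow 5 y).div_const 120)).sub ((hasDerivAt_pow 7 y).div_const 5040)).add ((hasDerivAt_pow 9 y).div_const 362880)).sub (Real.hasDerivAt_sin y)
      refine h2.congr_deriv ?_
      push_cast; ring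
    · have := cos_le8 hy; linarith
  linarith

private lemma cos_ge10 {x : ℝ} (hx : 0 ≤ x) : (1 - x^2/2 + x^4/24 - x^6/720 + x^8/40320 - x^10/3628800) ≤ Real.cos x := by
  have h : 0 ≤ Real.cos x - (1 - x^2/2 + x^4/24 - x^6/720 + x^8/40320 - x^10/3628800) := by
    refine mono_aux (f := fun y => Real.cos y - (1 - y^2/2 + y^4/24 - y^6/720 + y^8/40320 - y^10/3628800))
      (f' := fun y => (y - y^3/6 + y^5/120 - y^7/5040 + y^9/362880) - Real.sin y) (fun y => ?_) (by norm_num) (fun y hy => ?_) hx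
    · have h2 := (Real.hasDerivAt_cos y).sub ((((((hasDerivAt_const y (1:ℝ)).sub ((hasDerivAt_pow 2 y).div_const 2)).add ((hasDerivAt_pow 4 y).div_const 24)).sub ((hasDerivAt_pow 6 y).div_const 720)).add ((hasDerivAt_pow 8 y).div_const 40320)).sub ((hasDerivAt_pow 10 y).div_const 3628800))
      refine h2.congr_deriv ?_
      push_cast; ring
    · have := sin_le9 hy; linarith
  linarith

noncomputable def sinc (x : ℝ) : ℝ := if x = 0 then 1 else Real.sin x / x

private lemma sin_two_pos : 0 < Real.sin 2 :=
  Real.sin_pos_of_pos_of_lt_pi (by norm_num) (by linarith [Real.pi_gt_three])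

private lemma sinc_two_pos : 0 < sinc 2 := by
  rw [sinc, if_neg (by norm_num)]
  have := sin_two_pos
  positivity

/-- partial Euler products tend to `sin z / z`. -/
private lemma tendsto_prod (z : ℝ) (hz : z ≠ 0) :
    Filter.Tendsto (fun n => ∏ j ∈ Finset.range n, (1 - (z/π)^2/((j:ℝ)+1)^2)) Filter.atTop
      (nhds (Real.sin z / z)) := by
  have h := Real.tendsto_euler_sin_prod (z/π)
  have hπ : (π:ℝ) ≠ 0 := Real.pi_ne_zero
  have hz' : π * (z/π) = z := by field_simp
  simp only [hz'] at h
  have h2 := h.div_const z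
  simpa only [mul_div_cancel_left₀ _ hz] using h2

private lemma rpow_le_sin_div (r : ℝ) (hr0 : 0 < r) (hr1 : r ≤ 1) :
    (Real.sin 2 / 2) ^ (r^2 : ℝ) ≤ Real.sin (2*r) / (2*r) := by
  have t1 := tendsto_prod (2*r) (ne_of_gt (by positivity))
  have t2 := (tendsto_prod 2 two_ne_zero).rpow_const (p := r^2) (Or.inr (sq_nonneg r))
  refine le_of_tendsto_of_tendsto' t2 t1 (fun n => ?_)
  have hπ3 := Real.pi_gt_three
  have hα : ∀ j : ℕ, 0 ≤ (2/π)^2/((j:ℝ)+1)^2 ∧ (2/π)^2/((j:ℝ)+1)^2 ≤ 1 := by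
    intro j
    have hj : (1:ℝ) ≤ ((j:ℝ)+1)^2 := by
      have h0 : (0:ℝ) ≤ (j:ℝ) := Nat.cast_nonneg j
      nlinarith
    have h1 : (2/π)^2 ≤ (1:ℝ) := by
      rw [div_pow, div_le_one (by positivity)]
      nlinarith
    constructor
    · positivity
    · calc (2/π)^2/((j:ℝ)+1)^2 ≤ (2/π)^2/1 := by
            apply div_le_div_of_nonneg_left (by positivity) one_pos hj
          _ ≤ 1 := by rw [div_one]; exact h1
  rw [← Real.finset_prod_rpow (Finset.range n) (fun j => 1 - (2/π)^2/((j:ℝ)+1)^2) (fun j _ => by have := (hα j).2; linarith) (r^2)]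
  apply Finset.prod_le_prod
  · intro j _
    exact Real.rpow_nonneg (by linarith [(hα j).2]) _
  · intro j _
    have hb := rpow_one_add_le_one_add_mul_self (s := -((2/π)^2/((j:ℝ)+1)^2))
      (by linarith [(hα j).2]) (sq_nonneg r) (by nlinarith)
    have e1 : (1:ℝ) + -((2/π)^2/((j:ℝ)+1)^2) = 1 - (2/π)^2/((j:ℝ)+1)^2 := by ring
    have e2 : (1:ℝ) + r^2 * -((2/π)^2/((j:ℝ)+1)^2) = 1 - (2*r/π)^2/((j:ℝ)+1)^2 := by
      field_simp
      ring
    rw [e1, e2] at hb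
    exact hb

/-- Key lemma (C): `sinc(2r)² ≥ exp(2 log(sinc 2) r²)`. -/
private lemma lemC (r : ℝ) (hr0 : 0 ≤ r) (hr1 : r ≤ 1) :
    Real.exp (2 * Real.log (sinc 2) * r^2) ≤ (sinc (2*r))^2 := by
  rcases eq_or_lt_of_le hr0 with h0 | h0
  · simp [← h0, sinc]
  · have h2r : (2*r) ≠ 0 := by positivity
    have hs2 : sinc 2 = Real.sin 2 / 2 := by rw [sinc, if_neg (by norm_num)]
    have hkey := rpow_le_sin_div r h0 hr1
    have e1 : sinc (2*r) = Real.sin (2*r) / (2*r) := by rw [sinc, if_neg h2r]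
    rw [e1]
    have hrpow_pos : (0:ℝ) ≤ (Real.sin 2 / 2) ^ (r^2 : ℝ) :=
      Real.rpow_nonneg (by linarith [sin_two_pos]) _
    have hsq := pow_le_pow_left₀ hrpow_pos hkey 2
    refine le_trans (le_of_eq ?_) hsq
    rw [← Real.rpow_natCast ((Real.sin 2 / 2) ^ (r^2:ℝ)) 2, ← Real.rpow_mul (by linarith [sin_two_pos])]
    rw [hs2, Real.rpow_def_of_pos (by linarith [sin_two_pos])]
    ring_nf

/-- `c = -2 log (sinc 2) ≥ 3/2`. -/
private lemma lemc32 : (3:ℝ)/2 ≤ -2 * Real.log (sinc 2) := by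
  have hs : sinc 2 = Real.sin 2 / 2 := by rw [sinc, if_neg (by norm_num)]
  have hsin : Real.sin 2 ≤ 14/15 := by
    have := sin_le5 (x := 2) (by norm_num)
    norm_num at this
    linarith
  have hexp : Real.exp (3/4) ≤ 15/7 := by
    have h1 : Real.exp (3/4) ^ (4:ℕ) = Real.exp 3 := by
      rw [← Real.exp_nat_mul]
      norm_num
    have h3 : Real.exp 3 = Real.exp 1 ^ (3:ℕ) := by
      rw [← Real.exp_nat_mul]; norm_num
    have he := Real.exp_one_lt_d9
    have h4 : Real.exp (3/4) ^ (4:ℕ) < (15/7:ℝ)^(4:ℕ) := by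
      rw [h1, h3]
      calc Real.exp 1 ^ (3:ℕ) < 2.7182818286^(3:ℕ) :=
            pow_lt_pow_left₀ he (le_of_lt (Real.exp_pos 1)) (by norm_num)
        _ ≤ (15/7:ℝ)^(4:ℕ) := by norm_num
    exact le_of_pow_le_pow_left₀ (by norm_num) (by norm_num) h4.le
  have hlog : Real.log (sinc 2) ≤ -(3/4) := by
    rw [Real.log_le_iff_le_exp sinc_two_pos, hs]
    have : Real.exp (-(3/4)) = 1 / Real.exp (3/4) := by
      rw [Real.exp_neg]; ring
    rw [this]
    rw [le_div_iff₀ (Real.exp_pos _)]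
    nlinarith [Real.exp_pos (3/4 : ℝ)]
  linarith

/-- exp lower bound: `1 + t + t²/2 ≤ exp t` for `t ≥ 0`. -/
private lemma exp_quad {t : ℝ} (ht : 0 ≤ t) : 1 + t + t^2/2 ≤ Real.exp t := by
  have h := Real.sum_le_exp_of_nonneg ht 3
  norm_num [Finset.sum_range_succ] at h
  linarith

/-- Key lemma (B'): quantitative lower bound for `k₊ - k₋`. -/
private lemma lemB (r : ℝ) (hr0 : 0 ≤ r) (hr1 : r ≤ 1) :
    16*r^4/45 ≤ ((1 + sinc (4*r))/2 - (sinc (2*r))^2) * (1 + 3/2*r^2 + 9/8*r^4) := by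
  rcases eq_or_lt_of_le hr0 with h0 | h0
  · simp [← h0, sinc]
  · have h4r : (4*r) ≠ 0 := by positivity
    have h2r : (2*r) ≠ 0 := by positivity
    have e4 : sinc (4*r) = Real.sin (4*r) / (4*r) := by rw [sinc, if_neg h4r]
    have e2 : sinc (2*r) = Real.sin (2*r) / (2*r) := by rw [sinc, if_neg h2r]
    have hs := sin_ge7 (x := 4*r) (by positivity)
    have hc := cos_ge10 (x := 4*r) (by positivity)
    have hsq : Real.sin (2*r)^2 = 1/2 - Real.cos (4*r)/2 := by
      have h := Real.sin_sq_eq_half_sub (2*r)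
      rw [show 2*(2*r) = 4*r by ring] at h
      exact h
    rw [e4, e2, div_pow, hsq]
    have expand : ((1 + Real.sin (4*r)/(4*r))/2 - (1/2 - Real.cos (4*r)/2)/(2*r)^2)
        = (4*r^2 + r * Real.sin (4*r) + Real.cos (4*r) - 1)/(8*r^2) := by
      field_simp
      ring
    rw [expand, div_mul_eq_mul_div, le_div_iff₀ (by positivity : (0:ℝ) < 8*r^2)]
    have h1 : r * (4*r - (4*r)^3/6 + (4*r)^5/120 - (4*r)^7/5040) ≤ r * Real.sin (4*r) :=
      mul_le_mul_of_nonneg_left hs (le_of_lt h0)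
    have hQ : 128/45*r^6 - 512/315*r^8 - 4096/14175*r^10
        ≤ 4*r^2 + r * Real.sin (4*r) + Real.cos (4*r) - 1 := by
      nlinarith [h1, hc]
    have hQM : (128/45*r^6 - 512/315*r^8 - 4096/14175*r^10) * (1 + 3/2*r^2 + 9/8*r^4)
        ≤ (4*r^2 + r * Real.sin (4*r) + Real.cos (4*r) - 1) * (1 + 3/2*r^2 + 9/8*r^4) :=
      mul_le_mul_of_nonneg_right hQ (by positivity)
    have h8 : (0:ℝ) ≤ r^8 := by positivity
    have hr4 : r^4 ≤ 1 := pow_le_one₀ hr0 hr1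
    have hr6 : r^6 ≤ 1 := pow_le_one₀ hr0 hr1
    have hpoly : 16*r^4/45 * (8*r^2)
        ≤ (128/45*r^6 - 512/315*r^8 - 4096/14175*r^10) * (1 + 3/2*r^2 + 9/8*r^4) := by
      nlinarith [mul_le_mul_of_nonneg_left hr4 h8, mul_le_mul_of_nonneg_left hr6 h8, h8,
        mul_nonneg h8 (sq_nonneg r)]
    linarith

/-- `a^m - b^m ≥ m b^(m-1) (a-b)` shifted form. -/
private lemma pow_sub_pow_ge (a b : ℝ) (hb : 0 ≤ b) (hab : b ≤ a) :
    ∀ n : ℕ, ((n:ℝ)+1) * b^n * (a-b) ≤ a^(n+1) - b^(n+1) := by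
  intro n
  induction n with
  | zero => simp
  | succ n ih =>
    have ha : (0:ℝ) ≤ a := le_trans hb hab
    have e1 : a^(n+2) - b^(n+2) = a*(a^(n+1) - b^(n+1)) + b^(n+1)*(a-b) := by ring
    have e2 : a*(((n:ℝ)+1) * b^n * (a-b)) ≤ a*(a^(n+1) - b^(n+1)) :=
      mul_le_mul_of_nonneg_left ih ha
    have hcoef : (0:ℝ) ≤ ((n:ℝ)+1) * b^n * (a-b) := by
      have : (0:ℝ) ≤ a - b := by linarith
      positivity
    have e3 : b*(((n:ℝ)+1) * b^n * (a-b)) ≤ a*(((n:ℝ)+1) * b^n * (a-b)) :=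
      mul_le_mul_of_nonneg_right hab hcoef
    have e4 : b*(((n:ℝ)+1) * b^n * (a-b)) = ((n:ℝ)+1) * b^(n+1) * (a-b) := by ring
    push_cast
    nlinarith [mul_nonneg (pow_nonneg hb (n+1)) (show (0:ℝ) ≤ a - b by linarith)]

/-- For `r ∈ [0,1]`, `m ≥ 1`, with `k₊ = (1 + sinc(4r))/2`, `k₋ = sinc(2r)²`, and
`c = -2 ln (sinc 2)`, we have `k₊^m - k₋^m ≥ (16 r⁴ m / 45) exp(-c m r²)`. -/
theorem kplus_pow_sub_kminus_pow_lower_bound (r : ℝ) (hr0 : 0 ≤ r) (hr1 : r ≤ 1)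
    (m : ℕ) (hm : 1 ≤ m) :
    ((1 + sinc (4 * r)) / 2) ^ m - ((sinc (2 * r)) ^ 2) ^ m
      ≥ (16 * r ^ 4 * (m : ℝ) / 45) *
          Real.exp (-((-2 * Real.log (sinc 2)) * (m : ℝ) * r ^ 2)) := by
  set A := (1 + sinc (4 * r)) / 2 with hA
  set B := (sinc (2 * r)) ^ 2 with hB
  set E := Real.exp (2 * Real.log (sinc 2) * r ^ 2) with hE
  have hE0 : 0 < E := Real.exp_pos _
  have hC : E ≤ B := lemC r hr0 hr1
  have hM0 : (0:ℝ) < 1 + 3/2*r^2 + 9/8*r^4 := by positivity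
  have hBp := lemB r hr0 hr1
  have hME : (1 + 3/2*r^2 + 9/8*r^4) * E ≤ 1 := by
    have ht : (0:ℝ) ≤ 3/2*r^2 := by positivity
    have hq := exp_quad ht
    have e : (3/2*r^2)^2/2 = 9/8*r^4 := by ring
    have h1 : 1 + 3/2*r^2 + 9/8*r^4 ≤ Real.exp (3/2*r^2) := by linarith
    have h2 : Real.exp (3/2*r^2) ≤ Real.exp (-(2*Real.log (sinc 2) * r^2)) := by
      apply Real.exp_le_exp.2
      nlinarith [lemc32, sq_nonneg r]
    have h3 : Real.exp (-(2*Real.log (sinc 2) * r^2)) * E = 1 := by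
      rw [hE, ← Real.exp_add]
      norm_num
    calc (1 + 3/2*r^2 + 9/8*r^4) * E ≤ Real.exp (-(2*Real.log (sinc 2)*r^2)) * E :=
          mul_le_mul_of_nonneg_right (h1.trans h2) hE0.le
      _ = 1 := h3
  have hABnn : 0 ≤ A - B := by
    have h' : 0 ≤ (1 + 3/2*r^2 + 9/8*r^4) * (A-B) := by rw [mul_comm]; exact le_trans (by positivity) hBp
    exact nonneg_of_mul_nonneg_right h' hM0
  have hAB : 16*r^4/45 * E ≤ A - B := by
    calc 16*r^4/45 * E ≤ ((A-B)*(1+3/2*r^2+9/8*r^4)) * E :=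
          mul_le_mul_of_nonneg_right hBp hE0.le
      _ = (A-B) * ((1+3/2*r^2+9/8*r^4)*E) := by ring
      _ ≤ (A-B) * 1 := mul_le_mul_of_nonneg_left hME hABnn
      _ = A - B := mul_one _
  have hBnn : 0 ≤ B := by rw [hB]; positivity
  have hABle : B ≤ A := by linarith
  obtain ⟨n, rfl⟩ : ∃ n, m = n + 1 := ⟨m - 1, (Nat.succ_pred_eq_of_pos hm).symm⟩
  have hpow := pow_sub_pow_ge A B hBnn hABle n
  have hBE : E^n ≤ B^n := pow_le_pow_left₀ hE0.le hC n
  have hexp : Real.exp (-((-2 * Real.log (sinc 2)) * (((n:ℝ))+1) * r^2)) = E^(n+1) := by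
    rw [hE, ← Real.exp_nat_mul]
    congr 1
    push_cast
    ring
  rw [ge_iff_le]
  have goal_eq : (16 * r ^ 4 * (((n+1:ℕ)):ℝ) / 45) *
      Real.exp (-((-2 * Real.log (sinc 2)) * (((n+1:ℕ)):ℝ) * r ^ 2))
      = (((n:ℝ))+1) * E^n * (16*r^4/45 * E) := by
    push_cast
    rw [hexp]
    ring
  rw [goal_eq]
  have step : (((n:ℝ))+1) * E^n * (16*r^4/45 * E) ≤ (((n:ℝ))+1) * B^n * (A - B) := by
    apply mul_le_mul
    · apply mul_le_mul_of_nonneg_left hBE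
      positivity
    · exact hAB
    · positivity
    · have : (0:ℝ) ≤ B^n := pow_nonneg hBnn n
      positivity
  exact le_trans step hpow
end

section
/- For all x ∈ [0, 1] with x > 0, one has sinc(2x)² ≥ exp(-c x²), where c = -2 ln(sinc(2)) and sinc(y) = sin(y)/y. -/
open Real hiding sinc
open Filter Finset Topology

lemma sinc_pos_of (t : ℝ) (ht0 : 0 < t) (htpi : t < π) : 0 < sinc t := by
  rw [sinc, if_neg ht0.ne']
  exact div_pos (Real.sin_pos_of_pos_of_lt_pi ht0 htpi) ht0

lemma factor_pos (t : ℝ) (ht0 : 0 < t) (ht2 : t ≤ 2) (j : ℕ) :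
    0 < 1 - (t / π) ^ 2 / ((j : ℝ) + 1) ^ 2 := by
  have hpi : (2 : ℝ) < π := by
    have := Real.pi_gt_three; linarith
  have hX : (t / π) ^ 2 < 1 := by
    have h1 : t / π < 1 := (div_lt_one (by linarith)).2 (by linarith)
    have h0 : 0 ≤ t / π := by positivity
    nlinarith
  have hj : (1 : ℝ) ≤ ((j : ℝ) + 1) ^ 2 := by
    have : (1 : ℝ) ≤ (j : ℝ) + 1 := by linarith [Nat.cast_nonneg (α := ℝ) j]
    nlinarith
  have : (t / π) ^ 2 / ((j : ℝ) + 1) ^ 2 < 1 := by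
    calc (t / π) ^ 2 / ((j : ℝ) + 1) ^ 2 ≤ (t / π) ^ 2 / 1 := by
          apply div_le_div_of_nonneg_left (by positivity) one_pos hj
      _ = (t / π) ^ 2 := by ring
      _ < 1 := hX
  linarith

lemma log_sinc_tendsto (t : ℝ) (ht0 : 0 < t) (ht2 : t ≤ 2) :
    Tendsto (fun n : ℕ => ∑ j ∈ Finset.range n, Real.log (1 - (t / π) ^ 2 / ((j : ℝ) + 1) ^ 2))
      atTop (𝓝 (Real.log (sinc t))) := by
  have hpi : (2 : ℝ) < π := by have := Real.pi_gt_three; linarith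
  have htpi : t < π := by linarith
  have hX0 : 0 < t / π := by positivity
  have hprod : Tendsto (fun n : ℕ => ∏ j ∈ Finset.range n,
      ((1 : ℝ) - (t / π) ^ 2 / ((j : ℝ) + 1) ^ 2)) atTop (𝓝 (sinc t)) := by
    have h := Real.tendsto_euler_sin_prod (t / π)
    have hc : π * (t / π) = t := by field_simp
    rw [hc] at h
    have h2 := h.const_mul (1 / t)
    have hsinc : 1 / t * Real.sin t = sinc t := by
      rw [sinc, if_neg ht0.ne']; ring
    rw [hsinc] at h2
    convert h2 using 2 with n
    field_simp
  have hlog := (Real.continuousAt_log (sinc_pos_of t ht0 htpi).ne').tendsto.comp hprod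
  convert hlog using 2 with n
  rw [Function.comp_apply, Real.log_prod]
  intro j _
  exact (factor_pos t ht0 ht2 j).ne'

lemma key_term (a l : ℝ) (ha0 : 0 ≤ a) (ha1 : a < 1) (hl0 : 0 ≤ l) (hl1 : l ≤ 1) :
    l * Real.log (1 - a) ≤ Real.log (1 - l * a) := by
  have hconc := strictConcaveOn_log_Ioi.concaveOn
  have h := hconc.2 (Set.mem_Ioi.2 one_pos) (Set.mem_Ioi.2 (by linarith : (0:ℝ) < 1 - a))
    (by linarith : 0 ≤ 1 - l) hl0 (by ring)
  simp only [smul_eq_mul, Real.log_one, mul_zero, zero_add] at h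
  calc l * Real.log (1 - a) ≤ Real.log ((1 - l) * 1 + l * (1 - a)) := by linarith
    _ = Real.log (1 - l * a) := by ring_nf

lemma log_sinc_ge (x : ℝ) (hx0 : 0 < x) (hx1 : x ≤ 1) :
    x ^ 2 * Real.log (sinc 2) ≤ Real.log (sinc (2 * x)) := by
  have hpi : (2 : ℝ) < π := by have := Real.pi_gt_three; linarith
  have h2x0 : 0 < 2 * x := by linarith
  have h2x2 : 2 * x ≤ 2 := by linarith
  have hA := (log_sinc_tendsto 2 two_pos le_rfl).const_mul (x ^ 2)
  have hB := log_sinc_tendsto (2 * x) h2x0 h2x2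
  refine le_of_tendsto_of_tendsto' hA hB ?_
  intro n
  rw [Finset.mul_sum]
  apply Finset.sum_le_sum
  intro j _
  have ha0 : 0 ≤ (2 / π) ^ 2 / ((j : ℝ) + 1) ^ 2 := by positivity
  have ha1 : (2 / π) ^ 2 / ((j : ℝ) + 1) ^ 2 < 1 := by
    have := factor_pos 2 two_pos le_rfl j; linarith
  have hl0 : 0 ≤ x ^ 2 := by positivity
  have hl1 : x ^ 2 ≤ 1 := by nlinarith
  have := key_term _ _ ha0 ha1 hl0 hl1
  calc x ^ 2 * Real.log (1 - (2 / π) ^ 2 / ((j : ℝ) + 1) ^ 2)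
      ≤ Real.log (1 - x ^ 2 * ((2 / π) ^ 2 / ((j : ℝ) + 1) ^ 2)) := this
    _ = Real.log (1 - (2 * x / π) ^ 2 / ((j : ℝ) + 1) ^ 2) := by ring_nf

/-- For `x ∈ (0,1]`, `sinc(2x)² ≥ exp(-c x²)` with `c = -2 ln (sinc 2)`. -/
theorem sinc_sq_ge_exp (x : ℝ) (hx0 : 0 < x) (hx1 : x ≤ 1) :
    (sinc (2 * x)) ^ 2 ≥ Real.exp (-((-2 * Real.log (sinc 2)) * x ^ 2)) := by
  have hpi : (2 : ℝ) < π := by have := Real.pi_gt_three; linarith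
  have hpos : 0 < sinc (2 * x) := sinc_pos_of _ (by linarith) (by linarith)
  have hkey := log_sinc_ge x hx0 hx1
  have h1 : Real.exp (-((-2 * Real.log (sinc 2)) * x ^ 2))
      = Real.exp (x ^ 2 * Real.log (sinc 2)) ^ 2 := by
    rw [← Real.exp_nat_mul]; ring_nf
  rw [ge_iff_le, h1]
  have h2 : Real.exp (x ^ 2 * Real.log (sinc 2)) ≤ sinc (2 * x) := by
    calc Real.exp (x ^ 2 * Real.log (sinc 2)) ≤ Real.exp (Real.log (sinc (2 * x))) :=
          Real.exp_le_exp.2 hkey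
      _ = sinc (2 * x) := Real.exp_log hpos
  have h3 : 0 ≤ Real.exp (x ^ 2 * Real.log (sinc 2)) := (Real.exp_pos _).le
  nlinarith
end

section
/- Let r ∈ [0,1]. Then ((1 + sinc(4r))/2) - sinc(2r)² ≥ (16 r⁴ / 45) · (1 - 4 r² / 7). -/
section
open Real

lemma nonneg_of_deriv (f f' : ℝ → ℝ) (hd : ∀ x, HasDerivAt f (f' x) x)
    (h0 : f 0 = 0) (hf' : ∀ x, 0 ≤ x → 0 ≤ f' x) :
    ∀ x, 0 ≤ x → 0 ≤ f x := by
  intro x hx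
  have hm : MonotoneOn f (Set.Ici (0:ℝ)) := by
    refine monotoneOn_of_deriv_nonneg (convex_Ici 0) ?_ ?_ ?_
    · exact (Differentiable.continuous fun y => (hd y).differentiableAt).continuousOn
    · intro y _; exact (hd y).differentiableAt.differentiableWithinAt
    · intro y hy
      rw [(hd y).deriv]
      exact hf' y (le_of_lt (by simpa [interior_Ici] using hy))
  have := hm Set.self_mem_Ici (Set.mem_Ici.2 hx) hx
  rw [h0] at this
  exact this

lemma f1_nonneg : ∀ x : ℝ, 0 ≤ x → 0 ≤ x - Real.sin x := by
  refine nonneg_of_deriv _ (fun x => 1 - Real.cos x) (fun x => ?_) (by simp) ?_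
  · exact (hasDerivAt_id x).sub (Real.hasDerivAt_sin x)
  · intro x _; show 0 ≤ 1 - Real.cos x; linarith [Real.cos_le_one x]

lemma f2_nonneg : ∀ x : ℝ, 0 ≤ x → 0 ≤ Real.cos x - (1 - x^2/2) := by
  refine nonneg_of_deriv _ (fun x => x - Real.sin x) (fun x => ?_) (by norm_num) f1_nonneg
  have := ((Real.hasDerivAt_cos x).sub ((hasDerivAt_const x (1:ℝ)).sub ((hasDerivAt_pow 2 x).div_const 2)))
  refine this.congr_deriv ?_
  push_cast; ring

lemma f3_nonneg : ∀ x : ℝ, 0 ≤ x → 0 ≤ Real.sin x - (x - x^3/6) := by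
  refine nonneg_of_deriv _ (fun x => Real.cos x - (1 - x^2/2)) (fun x => ?_) (by norm_num) f2_nonneg
  have := ((Real.hasDerivAt_sin x).sub ((hasDerivAt_id x).sub ((hasDerivAt_pow 3 x).div_const 6)))
  refine this.congr_deriv ?_
  push_cast; ring

lemma f4_nonneg : ∀ x : ℝ, 0 ≤ x → 0 ≤ (1 - x^2/2 + x^4/24) - Real.cos x := by
  refine nonneg_of_deriv _ (fun x => Real.sin x - (x - x^3/6)) (fun x => ?_) (by norm_num) f3_nonneg
  have := ((((hasDerivAt_const x (1:ℝ)).sub ((hasDerivAt_pow 2 x).div_const 2)).add ((hasDerivAt_pow 4 x).div_const 24)).sub (Real.hasDerivAt_cos x))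
  refine this.congr_deriv ?_
  push_cast; ring

lemma f5_nonneg : ∀ x : ℝ, 0 ≤ x → 0 ≤ (x - x^3/6 + x^5/120) - Real.sin x := by
  refine nonneg_of_deriv _ (fun x => (1 - x^2/2 + x^4/24) - Real.cos x) (fun x => ?_) (by norm_num) f4_nonneg
  have := ((((hasDerivAt_id x).sub ((hasDerivAt_pow 3 x).div_const 6)).add ((hasDerivAt_pow 5 x).div_const 120)).sub (Real.hasDerivAt_sin x))
  refine this.congr_deriv ?_
  push_cast; ring

lemma f6_nonneg : ∀ x : ℝ, 0 ≤ x → 0 ≤ Real.cos x - (1 - x^2/2 + x^4/24 - x^6/720) := by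
  refine nonneg_of_deriv _ (fun x => (x - x^3/6 + x^5/120) - Real.sin x) (fun x => ?_) (by norm_num) f5_nonneg
  have := ((Real.hasDerivAt_cos x).sub ((((hasDerivAt_const x (1:ℝ)).sub ((hasDerivAt_pow 2 x).div_const 2)).add ((hasDerivAt_pow 4 x).div_const 24)).sub ((hasDerivAt_pow 6 x).div_const 720)))
  refine this.congr_deriv ?_
  push_cast; ring

lemma f7_nonneg : ∀ x : ℝ, 0 ≤ x → 0 ≤ Real.sin x - (x - x^3/6 + x^5/120 - x^7/5040) := by
  refine nonneg_of_deriv _ (fun x => Real.cos x - (1 - x^2/2 + x^4/24 - x^6/720)) (fun x => ?_) (by norm_num) f6_nonneg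
  have := ((Real.hasDerivAt_sin x).sub ((((hasDerivAt_id x).sub ((hasDerivAt_pow 3 x).div_const 6)).add ((hasDerivAt_pow 5 x).div_const 120)).sub ((hasDerivAt_pow 7 x).div_const 5040)))
  refine this.congr_deriv ?_
  push_cast; ring

lemma f8_nonneg : ∀ x : ℝ, 0 ≤ x → 0 ≤ (1 - x^2/2 + x^4/24 - x^6/720 + x^8/40320) - Real.cos x := by
  refine nonneg_of_deriv _ (fun x => Real.sin x - (x - x^3/6 + x^5/120 - x^7/5040)) (fun x => ?_) (by norm_num) f7_nonneg
  have := (((((hasDerivAt_const x (1:ℝ)).sub ((hasDerivAt_pow 2 x).div_const 2)).add ((hasDerivAt_pow 4 x).div_const 24)).sub ((hasDerivAt_pow 6 x).div_const 720)).add ((hasDerivAt_pow 8 x).div_const 40320)).sub (Real.hasDerivAt_cos x)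
  refine this.congr_deriv ?_
  push_cast; ring

lemma f9_nonneg : ∀ x : ℝ, 0 ≤ x → 0 ≤ (x - x^3/6 + x^5/120 - x^7/5040 + x^9/362880) - Real.sin x := by
  refine nonneg_of_deriv _ (fun x => (1 - x^2/2 + x^4/24 - x^6/720 + x^8/40320) - Real.cos x) (fun x => ?_) (by norm_num) f8_nonneg
  have := (((((hasDerivAt_id x).sub ((hasDerivAt_pow 3 x).div_const 6)).add ((hasDerivAt_pow 5 x).div_const 120)).sub ((hasDerivAt_pow 7 x).div_const 5040)).add ((hasDerivAt_pow 9 x).div_const 362880)).sub (Real.hasDerivAt_sin x)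
  refine this.congr_deriv ?_
  push_cast; ring

lemma f10_nonneg : ∀ x : ℝ, 0 ≤ x → 0 ≤ Real.cos x - (1 - x^2/2 + x^4/24 - x^6/720 + x^8/40320 - x^10/3628800) := by
  refine nonneg_of_deriv _ (fun x => (x - x^3/6 + x^5/120 - x^7/5040 + x^9/362880) - Real.sin x) (fun x => ?_) (by norm_num) f9_nonneg
  have := (Real.hasDerivAt_cos x).sub ((((((hasDerivAt_const x (1:ℝ)).sub ((hasDerivAt_pow 2 x).div_const 2)).add ((hasDerivAt_pow 4 x).div_const 24)).sub ((hasDerivAt_pow 6 x).div_const 720)).add ((hasDerivAt_pow 8 x).div_const 40320)).sub ((hasDerivAt_pow 10 x).div_const 3628800))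
  refine this.congr_deriv ?_
  push_cast; ring

lemma f11_nonneg : ∀ x : ℝ, 0 ≤ x → 0 ≤ Real.sin x - (x - x^3/6 + x^5/120 - x^7/5040 + x^9/362880 - x^11/39916800) := by
  refine nonneg_of_deriv _ (fun x => Real.cos x - (1 - x^2/2 + x^4/24 - x^6/720 + x^8/40320 - x^10/3628800)) (fun x => ?_) (by norm_num) f10_nonneg
  have := (Real.hasDerivAt_sin x).sub ((((((hasDerivAt_id x).sub ((hasDerivAt_pow 3 x).div_const 6)).add ((hasDerivAt_pow 5 x).div_const 120)).sub ((hasDerivAt_pow 7 x).div_const 5040)).add ((hasDerivAt_pow 9 x).div_const 362880)).sub ((hasDerivAt_pow 11 x).div_const 39916800))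
  refine this.congr_deriv ?_
  push_cast; ring

lemma key_ineq (t : ℝ) (ht0 : 0 ≤ t) (ht4 : t ≤ 4) :
    0 ≤ t^2 + t * Real.sin t + 4 * Real.cos t - 4 - t^6/360 + t^8/10080 := by
  have hs := f11_nonneg t ht0
  have hc := f10_nonneg t ht0
  have hts : t * (t - t^3/6 + t^5/120 - t^7/5040 + t^9/362880 - t^11/39916800) ≤ t * Real.sin t :=
    mul_le_mul_of_nonneg_left (by linarith) ht0
  have h16 : t^2 ≤ 16 := by nlinarith
  have h10 : 0 ≤ t^10 := pow_nonneg ht0 10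
  nlinarith [mul_le_mul_of_nonneg_left h16 h10]

end

/-- For `r ∈ [0,1]`, `(1 + sinc(4r))/2 - sinc(2r)² ≥ (16 r⁴/45)(1 - 4r²/7)`. -/
theorem cos_variance_lower_bound (r : ℝ) (hr0 : 0 ≤ r) (hr1 : r ≤ 1) :
    (1 + sinc (4 * r)) / 2 - (sinc (2 * r)) ^ 2
      ≥ (16 * r ^ 4 / 45) * (1 - 4 * r ^ 2 / 7) := by
  rcases eq_or_lt_of_le hr0 with h | h
  · rw [← h]; norm_num [sinc]
  · have h4 : (4 * r) ≠ 0 := by positivity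
    have h2 : (2 * r) ≠ 0 := by positivity
    simp only [sinc, if_neg h4, if_neg h2]
    have hkey := key_ineq (4*r) (by linarith) (by linarith)
    have hsq : Real.sin (2*r)^2 = 1/2 - Real.cos (4*r)/2 := by
      have hc := Real.cos_sq (2*r)
      rw [show 2*(2*r) = 4*r by ring] at hc
      have hp := Real.sin_sq_add_cos_sq (2*r)
      linarith
    rw [ge_iff_le, ← sub_nonneg]
    have heq : (1 + Real.sin (4*r)/(4*r))/2 - (Real.sin (2*r)/(2*r))^2
        - (16*r^4/45)*(1 - 4*r^2/7)
        = ((4*r)^2 + (4*r)*Real.sin (4*r) + 4*Real.cos (4*r) - 4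
            - (4*r)^6/360 + (4*r)^8/10080)/(32*r^2) := by
      rw [div_pow, hsq]
      have hr : r ≠ 0 := ne_of_gt h
      field_simp
      ring
    rw [heq]
    exact div_nonneg hkey (by positivity)
end

section
/- Let X_1, …, X_m be independent real random variables and f : ℝ^m → ℝ be integrable with integrable square. Then Var[f(X_1,…,X_m)] = Σ_{k=1}^m E_{X_m,…,X_{k+1}}[ Var_{X_k}[ E_{X_{k-1},…,X_1}[f] ] ]. -/
open MeasureTheory Set

section aux
variable {m : ℕ} (μ : Fin m → Measure ℝ) [∀ i, IsProbabilityMeasure (μ i)]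

/-- Merging two independent copies along a predicate is measure-preserving. -/
lemma merge_measurePreserving (p : Fin m → Prop) [DecidablePred p] :
    MeasurePreserving (fun q : (Fin m → ℝ) × (Fin m → ℝ) => fun i => if p i then q.1 i else q.2 i)
      ((Measure.pi μ).prod (Measure.pi μ)) (Measure.pi μ) := by
  have hmeas : Measurable (fun q : (Fin m → ℝ) × (Fin m → ℝ) =>
      fun i => if p i then q.1 i else q.2 i) := by
    refine measurable_pi_lambda _ fun i => ?_
    by_cases h : p i
    · simpa [h, Function.comp_def] using (measurable_pi_apply i).comp measurable_fst
    · simpa [h, Function.comp_def] using (measurable_pi_apply i).comp measurable_snd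
  refine ⟨hmeas, ?_⟩
  refine (Measure.pi_eq fun s hs => ?_).symm
  rw [Measure.map_apply hmeas (MeasurableSet.univ_pi hs)]
  have hpre : (fun q : (Fin m → ℝ) × (Fin m → ℝ) => fun i => if p i then q.1 i else q.2 i) ⁻¹'
      (univ.pi s) = (univ.pi fun i => if p i then s i else univ) ×ˢ
        (univ.pi fun i => if p i then univ else s i) := by
    ext ⟨y, x⟩
    simp only [mem_preimage, mem_pi, mem_univ, true_implies, mem_prod]
    constructor
    · intro h
      constructor <;> intro i <;> by_cases hp : p i <;> simpa [hp] using h i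
    · rintro ⟨h1, h2⟩ i
      by_cases hp : p i
      · simpa [hp] using h1 i
      · simpa [hp] using h2 i
  rw [hpre, Measure.prod_prod, Measure.pi_pi, Measure.pi_pi, ← Finset.prod_mul_distrib]
  refine Finset.prod_congr rfl fun i _ => ?_
  by_cases hp : p i <;> simp [hp, measure_univ]

/-- Updating one coordinate with an independent sample is measure-preserving. -/
lemma update_measurePreserving (k : Fin m) :
    MeasurePreserving (fun q : (Fin m → ℝ) × ℝ => Function.update q.1 k q.2)
      ((Measure.pi μ).prod (μ k)) (Measure.pi μ) := by
  have hmeas : Measurable (fun q : (Fin m → ℝ) × ℝ => Function.update q.1 k q.2) := by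
    refine measurable_pi_lambda _ fun i => ?_
    by_cases h : i = k
    · subst h; simpa using measurable_snd
    · simp only [Function.update_of_ne h]
      exact (measurable_pi_apply i).comp measurable_fst
  refine ⟨hmeas, ?_⟩
  refine (Measure.pi_eq fun s hs => ?_).symm
  rw [Measure.map_apply hmeas (MeasurableSet.univ_pi hs)]
  have hpre : (fun q : (Fin m → ℝ) × ℝ => Function.update q.1 k q.2) ⁻¹' (univ.pi s)
      = (univ.pi (Function.update s k univ)) ×ˢ (s k) := by
    ext ⟨x, t⟩
    simp only [mem_preimage, mem_pi, mem_univ, true_implies, mem_prod]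
    constructor
    · intro h
      refine ⟨fun i => ?_, by simpa using h k⟩
      by_cases hik : i = k
      · subst hik; simp
      · simpa [Function.update_of_ne hik] using h i
    · rintro ⟨h1, h2⟩ i
      by_cases hik : i = k
      · subst hik; simpa using h2
      · have := h1 i
        simpa [Function.update_of_ne hik] using this
  rw [hpre, Measure.prod_prod, Measure.pi_pi]
  have : ∀ i, μ i (Function.update s k univ i) = Function.update (fun j => μ j (s j)) k 1 i := by
    intro i
    by_cases hik : i = k
    · subst hik; simp
    · simp [Function.update_of_ne hik]
  rw [Finset.prod_congr rfl fun i _ => this i, Finset.prod_update_of_mem (Finset.mem_univ k),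
    one_mul, mul_comm, ← Finset.mul_prod_erase Finset.univ _ (Finset.mem_univ k),
    Finset.sdiff_singleton_eq_erase]

/-- `seqMerge n (y, x)` takes the first `n` coordinates from `y` and the rest from `x`. -/
def seqMerge (n : ℕ) (q : (Fin m → ℝ) × (Fin m → ℝ)) : Fin m → ℝ :=
  fun i => if (i : ℕ) < n then q.1 i else q.2 i

lemma seqMerge_measurePreserving (n : ℕ) :
    MeasurePreserving (seqMerge (m := m) n)
      ((Measure.pi μ).prod (Measure.pi μ)) (Measure.pi μ) :=
  merge_measurePreserving μ (fun i => (i : ℕ) < n)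

variable {μ} (f' : (Fin m → ℝ) → ℝ)

/-- Integrating out the first `n` coordinates. -/
noncomputable def seqE (n : ℕ) (x : Fin m → ℝ) : ℝ :=
  ∫ y, f' (seqMerge n (y, x)) ∂(Measure.pi μ)

variable {f'}

lemma seqE_stronglyMeasurable (hsm : StronglyMeasurable f') (n : ℕ) :
    StronglyMeasurable (seqE (μ := μ) f' n) :=
  (hsm.comp_measurable (seqMerge_measurePreserving μ n).measurable).integral_prod_left'

lemma seqE_comp_integrable (hsm : StronglyMeasurable f')
    (h1 : Integrable f' (Measure.pi μ)) (n : ℕ) :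
    Integrable (fun q => f' (seqMerge n q)) ((Measure.pi μ).prod (Measure.pi μ)) :=
  ((seqMerge_measurePreserving μ n).integrable_comp h1.aestronglyMeasurable).mpr h1

lemma seqE_sq_comp_integrable (hsm : StronglyMeasurable f')
    (h2 : Integrable (fun x => f' x ^ 2) (Measure.pi μ)) (n : ℕ) :
    Integrable (fun q => f' (seqMerge n q) ^ 2) ((Measure.pi μ).prod (Measure.pi μ)) :=
  ((seqMerge_measurePreserving μ n).integrable_comp h2.aestronglyMeasurable).mpr h2

lemma seqE_sq_integrable (hsm : StronglyMeasurable f')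
    (h1 : Integrable f' (Measure.pi μ)) (h2 : Integrable (fun x => f' x ^ 2) (Measure.pi μ))
    (n : ℕ) : Integrable (fun x => seqE (μ := μ) f' n x ^ 2) (Measure.pi μ) := by
  have hGint : Integrable (fun x => ∫ y, f' (seqMerge n (y, x)) ^ 2 ∂(Measure.pi μ))
      (Measure.pi μ) := (seqE_sq_comp_integrable hsm h2 n).integral_prod_right
  refine Integrable.mono' hGint
    ((seqE_stronglyMeasurable hsm n).pow 2).aestronglyMeasurable ?_
  filter_upwards [(seqE_comp_integrable hsm h1 n).prod_left_ae,
    (seqE_sq_comp_integrable hsm h2 n).prod_left_ae] with x hx1 hx2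
  have hmem : MemLp (fun y => f' (seqMerge n (y, x))) 2 (Measure.pi μ) :=
    (memLp_two_iff_integrable_sq hx1.aestronglyMeasurable).mpr hx2
  have hvar := ProbabilityTheory.variance_eq_sub hmem
  have hnn := ProbabilityTheory.variance_nonneg (fun y => f' (seqMerge n (y, x))) (Measure.pi μ)
  rw [hvar] at hnn
  simp only [Pi.pow_apply] at hnn
  rw [Real.norm_eq_abs, abs_of_nonneg (sq_nonneg _)]
  simp only [seqE]
  linarith

end aux

section step
variable {m : ℕ} {μ : Fin m → Measure ℝ} [∀ i, IsProbabilityMeasure (μ i)]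
  {f' : (Fin m → ℝ) → ℝ}

lemma seqMerge_update_key (k : Fin m) (t : ℝ) (y x : Fin m → ℝ) :
    seqMerge (k : ℕ) (y, Function.update x k t)
      = seqMerge ((k : ℕ) + 1) (Function.update y k t, x) := by
  funext i
  simp only [seqMerge]
  rcases lt_trichotomy (i : ℕ) (k : ℕ) with h | h | h
  · have hik : i ≠ k := fun e => by simp [e] at h
    rw [if_pos h, if_pos (by omega), Function.update_of_ne hik]
  · have hik : i = k := Fin.ext h
    subst hik
    rw [if_neg (by omega), if_pos (by omega), Function.update_self, Function.update_self]
  · have hik : i ≠ k := fun e => by simp [e] at h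
    rw [if_neg (by omega), if_neg (by omega), Function.update_of_ne hik]

/-- Claim B: integrating `seqE k` over the `k`-th coordinate gives `seqE (k+1)`, a.e. -/
lemma seqE_update_integral (hsm : StronglyMeasurable f')
    (h1 : Integrable f' (Measure.pi μ)) (k : Fin m) :
    ∀ᵐ x ∂(Measure.pi μ),
      ∫ t, seqE (μ := μ) f' (k : ℕ) (Function.update x k t) ∂(μ k)
        = seqE (μ := μ) f' ((k : ℕ) + 1) x := by
  set π := Measure.pi μ with hπdef
  have hu := update_measurePreserving μ k
  have hΦ := seqMerge_measurePreserving μ ((k : ℕ) + 1)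
  have hΘ : MeasurePreserving
      (fun q : ((Fin m → ℝ) × ℝ) × (Fin m → ℝ) => (Function.update q.1.1 k q.1.2, q.2))
      ((π.prod (μ k)).prod π) (π.prod π) := hu.prod (MeasurePreserving.id π)
  have hcomp : Integrable
      (fun q : ((Fin m → ℝ) × ℝ) × (Fin m → ℝ) =>
        f' (seqMerge ((k : ℕ) + 1) (Function.update q.1.1 k q.1.2, q.2)))
      ((π.prod (μ k)).prod π) :=
    ((hΦ.comp hΘ).integrable_comp h1.aestronglyMeasurable).mpr h1
  filter_upwards [hcomp.prod_left_ae, (seqE_comp_integrable hsm h1 ((k : ℕ) + 1)).prod_left_ae]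
    with x hx1 hx2
  -- hx1 : Integrable (fun w : (Fin m→ℝ)×ℝ => f' (seqMerge (k+1) (update w.1 k w.2, x))) (π.prod μk)
  have step1 : ∫ t, seqE (μ := μ) f' (k : ℕ) (Function.update x k t) ∂(μ k)
      = ∫ t, ∫ y, f' (seqMerge ((k : ℕ) + 1) (Function.update y k t, x)) ∂π ∂(μ k) := by
    refine integral_congr_ae (Filter.Eventually.of_forall fun t => ?_)
    simp only [seqE]
    exact integral_congr_ae (Filter.Eventually.of_forall fun y =>
      congrArg f' (seqMerge_update_key k t y x))
  have hswap := integral_prod_swap (μ := π) (ν := μ k)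
    (fun w : (Fin m → ℝ) × ℝ => f' (seqMerge ((k : ℕ) + 1) (Function.update w.1 k w.2, x)))
  have hsmz : AEStronglyMeasurable (fun z => f' (seqMerge ((k : ℕ) + 1) (z, x)))
      (Measure.map (fun q : (Fin m → ℝ) × ℝ => Function.update q.1 k q.2) (π.prod (μ k))) := by
    rw [hu.map_eq]
    exact (hsm.comp_measurable
      ((seqMerge_measurePreserving μ ((k : ℕ) + 1)).measurable.comp
        (measurable_id.prodMk measurable_const))).aestronglyMeasurable
  have hmap := integral_map (f := fun z => f' (seqMerge ((k : ℕ) + 1) (z, x)))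
    hu.measurable.aemeasurable hsmz
  rw [hu.map_eq] at hmap
  calc ∫ t, seqE (μ := μ) f' (k : ℕ) (Function.update x k t) ∂(μ k)
      = ∫ t, ∫ y, f' (seqMerge ((k : ℕ) + 1) (Function.update y k t, x)) ∂π ∂(μ k) := step1
    _ = ∫ z : ℝ × (Fin m → ℝ), f' (seqMerge ((k : ℕ) + 1) (Function.update z.2 k z.1, x))
          ∂((μ k).prod π) :=
        integral_integral (f := fun t y => f' (seqMerge ((k : ℕ) + 1) (Function.update y k t, x)))
          hx1.swap
    _ = ∫ w : (Fin m → ℝ) × ℝ, f' (seqMerge ((k : ℕ) + 1) (Function.update w.1 k w.2, x))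
          ∂(π.prod (μ k)) := hswap
    _ = ∫ z, f' (seqMerge ((k : ℕ) + 1) (z, x)) ∂π := hmap.symm
    _ = seqE (μ := μ) f' ((k : ℕ) + 1) x := rfl

end step

section step2
variable {m : ℕ} {μ : Fin m → Measure ℝ} [∀ i, IsProbabilityMeasure (μ i)]
  {f' : (Fin m → ℝ) → ℝ}

lemma seqE_step (hsm : StronglyMeasurable f') (h1 : Integrable f' (Measure.pi μ))
    (h2 : Integrable (fun x => f' x ^ 2) (Measure.pi μ)) (k : Fin m) :
    ∫ x, ((∫ t, seqE (μ := μ) f' (k : ℕ) (Function.update x k t) ^ 2 ∂(μ k))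
        - (∫ t, seqE (μ := μ) f' (k : ℕ) (Function.update x k t) ∂(μ k)) ^ 2) ∂(Measure.pi μ)
      = (∫ x, seqE (μ := μ) f' (k : ℕ) x ^ 2 ∂(Measure.pi μ))
        - ∫ x, seqE (μ := μ) f' ((k : ℕ) + 1) x ^ 2 ∂(Measure.pi μ) := by
  set π := Measure.pi μ with hπdef
  have hu := update_measurePreserving μ k
  have hsq := seqE_sq_integrable hsm h1 h2 (k : ℕ)
  have hq : Integrable
      (fun q : (Fin m → ℝ) × ℝ => seqE (μ := μ) f' (k : ℕ) (Function.update q.1 k q.2) ^ 2)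
      (π.prod (μ k)) :=
    (hu.integrable_comp ((seqE_stronglyMeasurable hsm (k : ℕ)).pow 2).aestronglyMeasurable).mpr hsq
  have hintA : Integrable
      (fun x => ∫ t, seqE (μ := μ) f' (k : ℕ) (Function.update x k t) ^ 2 ∂(μ k)) π :=
    hq.integral_prod_left
  have hA : ∫ x, ∫ t, seqE (μ := μ) f' (k : ℕ) (Function.update x k t) ^ 2 ∂(μ k) ∂π
      = ∫ x, seqE (μ := μ) f' (k : ℕ) x ^ 2 ∂π := by
    rw [integral_integral
      (f := fun x t => seqE (μ := μ) f' (k : ℕ) (Function.update x k t) ^ 2) hq]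
    have hmap := integral_map (f := fun x => seqE (μ := μ) f' (k : ℕ) x ^ 2)
      hu.measurable.aemeasurable (by
        rw [hu.map_eq]
        exact ((seqE_stronglyMeasurable hsm (k : ℕ)).pow 2).aestronglyMeasurable)
    rw [hu.map_eq] at hmap
    exact hmap.symm
  have haeB := seqE_update_integral hsm h1 k
  have hC : (fun x => (∫ t, seqE (μ := μ) f' (k : ℕ) (Function.update x k t) ∂(μ k)) ^ 2)
      =ᵐ[π] fun x => seqE (μ := μ) f' ((k : ℕ) + 1) x ^ 2 :=
    haeB.mono fun x hx => by dsimp only; rw [hx]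
  have hintC : Integrable
      (fun x => (∫ t, seqE (μ := μ) f' (k : ℕ) (Function.update x k t) ∂(μ k)) ^ 2) π :=
    (seqE_sq_integrable hsm h1 h2 ((k : ℕ) + 1)).congr hC.symm
  rw [integral_sub hintA hintC, hA, integral_congr_ae hC]

end step2

/-- Sequential law-of-total-variance decomposition. With `X_1, …, X_m` independent
(modeled by a product of probability measures `μ`) and `f` square-integrable,
`Var[f] = Σ_k E_{X_m,…,X_{k+1}}[ Var_{X_k}[ E_{X_{k-1},…,X_1}[f] ] ]`.
Here `E0 k x` integrates out the first `k` variables (the extra coordinates of `y`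
are harmless since each `μ i` is a probability measure); the `k`-th summand is the
expectation over the remaining variables of the variance over `X_k` of `E0 k`. -/
theorem sequential_variance_decomposition (m : ℕ) (μ : Fin m → Measure ℝ)
    [∀ i, IsProbabilityMeasure (μ i)] (f : (Fin m → ℝ) → ℝ)
    (hf : Integrable f (Measure.pi μ))
    (hf2 : Integrable (fun x => (f x) ^ 2) (Measure.pi μ)) :
    (∫ x, (f x) ^ 2 ∂(Measure.pi μ)) - (∫ x, f x ∂(Measure.pi μ)) ^ 2
      = ∑ k : Fin m, ∫ x,
          ((∫ t, ((fun x' : Fin m → ℝ =>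
              ∫ y, f (fun i => if (i : ℕ) < (k : ℕ) then y i else x' i) ∂(Measure.pi μ))
                (Function.update x k t)) ^ 2 ∂(μ k))
            - (∫ t, (fun x' : Fin m → ℝ =>
              ∫ y, f (fun i => if (i : ℕ) < (k : ℕ) then y i else x' i) ∂(Measure.pi μ))
                (Function.update x k t) ∂(μ k)) ^ 2) ∂(Measure.pi μ) := by
  obtain ⟨f', hsm, hff'⟩ := hf.aestronglyMeasurable
  have h1 : Integrable f' (Measure.pi μ) := hf.congr hff'
  have hff2 : (fun x => f x ^ 2) =ᵐ[Measure.pi μ] fun x => f' x ^ 2 :=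
    hff'.mono fun x hx => by dsimp only; rw [hx]
  have h2 : Integrable (fun x => f' x ^ 2) (Measure.pi μ) := hf2.congr hff2
  have hsummand : ∀ k : Fin m,
      (∫ x, ((∫ t, ((fun x' : Fin m → ℝ =>
          ∫ y, f (fun i => if (i : ℕ) < (k : ℕ) then y i else x' i) ∂(Measure.pi μ))
            (Function.update x k t)) ^ 2 ∂(μ k))
        - (∫ t, (fun x' : Fin m → ℝ =>
          ∫ y, f (fun i => if (i : ℕ) < (k : ℕ) then y i else x' i) ∂(Measure.pi μ))
            (Function.update x k t) ∂(μ k)) ^ 2) ∂(Measure.pi μ))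
      = (∫ x, seqE (μ := μ) f' (k : ℕ) x ^ 2 ∂(Measure.pi μ))
        - ∫ x, seqE (μ := μ) f' ((k : ℕ) + 1) x ^ 2 ∂(Measure.pi μ) := by
    intro k
    rw [← seqE_step hsm h1 h2 k]
    have hΦ := seqMerge_measurePreserving μ (k : ℕ)
    have hu := update_measurePreserving μ k
    have hcomp : (fun q : (Fin m → ℝ) × (Fin m → ℝ) => f (seqMerge (k : ℕ) q))
        =ᵐ[(Measure.pi μ).prod (Measure.pi μ)] fun q => f' (seqMerge (k : ℕ) q) :=
      ae_eq_comp hΦ.measurable.aemeasurable (by rwa [hΦ.map_eq])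
    have hswap : (fun q : (Fin m → ℝ) × (Fin m → ℝ) => f (seqMerge (k : ℕ) q.swap))
        =ᵐ[(Measure.pi μ).prod (Measure.pi μ)] fun q => f' (seqMerge (k : ℕ) q.swap) :=
      ae_eq_comp (f := Prod.swap)
        (g := fun q : (Fin m → ℝ) × (Fin m → ℝ) => f (seqMerge (k : ℕ) q))
        (g' := fun q : (Fin m → ℝ) × (Fin m → ℝ) => f' (seqMerge (k : ℕ) q))
        measurable_swap.aemeasurable (by rwa [Measure.prod_swap])
    have hE : (fun x' : Fin m → ℝ =>
          ∫ y, f (fun i => if (i : ℕ) < (k : ℕ) then y i else x' i) ∂(Measure.pi μ))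
        =ᵐ[Measure.pi μ] seqE (μ := μ) f' (k : ℕ) := by
      filter_upwards [Measure.ae_ae_of_ae_prod hswap] with x hx
      exact integral_congr_ae hx
    have hEu : (fun q : (Fin m → ℝ) × ℝ =>
          (fun x' : Fin m → ℝ =>
            ∫ y, f (fun i => if (i : ℕ) < (k : ℕ) then y i else x' i) ∂(Measure.pi μ))
          (Function.update q.1 k q.2))
        =ᵐ[(Measure.pi μ).prod (μ k)]
          fun q => seqE (μ := μ) f' (k : ℕ) (Function.update q.1 k q.2) :=
      ae_eq_comp (f := fun q : (Fin m → ℝ) × ℝ => Function.update q.1 k q.2)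
        (g := fun x' : Fin m → ℝ =>
          ∫ y, f (fun i => if (i : ℕ) < (k : ℕ) then y i else x' i) ∂(Measure.pi μ))
        (g' := seqE (μ := μ) f' (k : ℕ))
        hu.measurable.aemeasurable (by rwa [hu.map_eq])
    refine integral_congr_ae ?_
    filter_upwards [Measure.ae_ae_of_ae_prod hEu] with x hx
    have e1 : ∫ t, ((fun x' : Fin m → ℝ =>
          ∫ y, f (fun i => if (i : ℕ) < (k : ℕ) then y i else x' i) ∂(Measure.pi μ))
            (Function.update x k t)) ^ 2 ∂(μ k)
        = ∫ t, seqE (μ := μ) f' (k : ℕ) (Function.update x k t) ^ 2 ∂(μ k) :=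
      integral_congr_ae (hx.mono fun t ht => by dsimp only at ht ⊢; rw [ht])
    have e2 : ∫ t, (fun x' : Fin m → ℝ =>
          ∫ y, f (fun i => if (i : ℕ) < (k : ℕ) then y i else x' i) ∂(Measure.pi μ))
            (Function.update x k t) ∂(μ k)
        = ∫ t, seqE (μ := μ) f' (k : ℕ) (Function.update x k t) ∂(μ k) :=
      integral_congr_ae (hx.mono fun t ht => by dsimp only at ht ⊢; rw [ht])
    rw [e1, e2]
  have h0 : ∀ x, seqE (μ := μ) f' 0 x = f' x := fun x => by
    have hz : ∀ y, seqMerge (m := m) 0 (y, x) = x := fun y => funext fun i => by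
      simp [seqMerge]
    simp [seqE, hz]
  have hm : ∀ x, seqE (μ := μ) f' m x = ∫ y, f' y ∂(Measure.pi μ) := fun x => by
    have hz : ∀ y : Fin m → ℝ, seqMerge (m := m) m (y, x) = y := fun y => funext fun i => by
      simp [seqMerge, Fin.is_lt]
    simp [seqE, hz]
  have hB0 : ∫ x, seqE (μ := μ) f' 0 x ^ 2 ∂(Measure.pi μ)
      = ∫ x, (f x) ^ 2 ∂(Measure.pi μ) := by
    rw [integral_congr_ae (g := fun x => f' x ^ 2)
      (Filter.Eventually.of_forall fun x => by rw [h0])]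
    exact (integral_congr_ae hff2).symm
  have hBm : ∫ x, seqE (μ := μ) f' m x ^ 2 ∂(Measure.pi μ)
      = (∫ x, f x ∂(Measure.pi μ)) ^ 2 := by
    rw [integral_congr_ae (g := fun _ => (∫ y, f' y ∂(Measure.pi μ)) ^ 2)
      (Filter.Eventually.of_forall fun x => by rw [hm]), integral_const]
    rw [integral_congr_ae hff']
    simp
  calc (∫ x, (f x) ^ 2 ∂(Measure.pi μ)) - (∫ x, f x ∂(Measure.pi μ)) ^ 2
      = (∫ x, seqE (μ := μ) f' 0 x ^ 2 ∂(Measure.pi μ))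
        - ∫ x, seqE (μ := μ) f' m x ^ 2 ∂(Measure.pi μ) := by rw [hB0, hBm]
    _ = ∑ n ∈ Finset.range m, ((∫ x, seqE (μ := μ) f' n x ^ 2 ∂(Measure.pi μ))
        - ∫ x, seqE (μ := μ) f' (n + 1) x ^ 2 ∂(Measure.pi μ)) :=
      (Finset.sum_range_sub' (fun n => ∫ x, seqE (μ := μ) f' n x ^ 2 ∂(Measure.pi μ)) m).symm
    _ = ∑ k : Fin m, ((∫ x, seqE (μ := μ) f' (k : ℕ) x ^ 2 ∂(Measure.pi μ))
        - ∫ x, seqE (μ := μ) f' ((k : ℕ) + 1) x ^ 2 ∂(Measure.pi μ)) :=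
      (Fin.sum_univ_eq_sum_range (fun n => (∫ x, seqE (μ := μ) f' n x ^ 2 ∂(Measure.pi μ))
        - ∫ x, seqE (μ := μ) f' (n + 1) x ^ 2 ∂(Measure.pi μ)) m).symm
    _ = _ := by
      refine Finset.sum_congr rfl fun k _ => ?_
      rw [hsummand k]
end
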